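/- arXiv:1207.2009 — 3 statements merged into one kernel-verified Lean document; each statement's English description precedes it below -/
import Mathlib

section
/- Let N be a positive integer, d a Hall divisor of N, and A, B, C, D integers with A·d·D·d − B·N·C = d. Set M = [[A·d, B],[N·C, D·d]], a 2×2 integer matrix with determinant d. Then for every γ = [[a,b],[c,e]] in SL₂(ℤ) with N ∣ c, the matrix (1/d)·M·γ·adj(M) (where adj denotes the adjugate) is an integer matrix of determinant 1 whose lower-left entry is divisible by N. -/
/-- For a Hall divisor `d` of `N` and an Atkin–Lehner matrix
`M = [[A·d, B],[N·C, D·d]]` of determinant `d`, conjugation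
`(1/d)·M·γ·adj(M)` maps every element `γ` of `Γ₀(N)` to an integer matrix of
determinant `1` whose lower-left entry is divisible by `N`. -/
theorem atkin_lehner_normalizes (N d : ℕ) (hN : 0 < N)
    (hd : d ∣ N) (hHall : Nat.gcd d (N / d) = 1)
    (A B C D : ℤ) (hdet : A * d * (D * d) - B * (N * C) = d)
    (M : Matrix (Fin 2) (Fin 2) ℤ)
    (hM : M = !![A * d, B; N * C, D * d])
    (γ : Matrix (Fin 2) (Fin 2) ℤ) (hγ : γ.det = 1) (hc : (N : ℤ) ∣ γ 1 0) :
    ∃ γ' : Matrix (Fin 2) (Fin 2) ℤ,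
      (d : ℤ) • γ' = M * γ * M.adjugate ∧ γ'.det = 1 ∧ (N : ℤ) ∣ γ' 1 0 := by
  obtain ⟨m, hm⟩ := hd
  have hm' : (N : ℤ) = (d : ℤ) * (m : ℤ) := by exact_mod_cast congrArg (Nat.cast : ℕ → ℤ) hm
  obtain ⟨c', hc'⟩ := hc
  set a := γ 0 0 with ha
  set b := γ 0 1 with hb
  set e := γ 1 1 with he
  have hγeq : γ = !![a, b; (N : ℤ) * c', e] := by
    ext i j
    fin_cases i <;> fin_cases j <;>
      simp [ha, hb, he, ← hc']
  have hd0 : (d : ℤ) ≠ 0 := by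
    intro h
    have : d = 0 := by exact_mod_cast h
    subst this
    simp at hm
    omega
  have hkey : A * D * (d : ℤ) - B * (m : ℤ) * C = 1 := by
    have h2 : (d : ℤ) * (A * D * (d : ℤ) - B * (m : ℤ) * C) = (d : ℤ) * 1 := by
      rw [hm'] at hdet; linear_combination hdet
    exact mul_left_cancel₀ hd0 h2
  set γ' : Matrix (Fin 2) (Fin 2) ℤ :=
    !![A*D*(d:ℤ)*a + B*D*(d:ℤ)*(m:ℤ)*c' - A*(N:ℤ)*C*b - (A*D*(d:ℤ)-1)*e,
      A*A*(d:ℤ)*b + A*B*e - A*B*a - B*B*(m:ℤ)*c';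
      (N:ℤ)*(C*D*a + D*D*(d:ℤ)*c' - (m:ℤ)*C*C*b - C*D*e),
      -(A*D*(d:ℤ)-1)*a - B*D*(d:ℤ)*(m:ℤ)*c' + A*(N:ℤ)*C*b + A*D*(d:ℤ)*e] with hγ'
  have heq : (d : ℤ) • γ' = M * γ * M.adjugate := by
    subst hM
    rw [hγeq, Matrix.adjugate_fin_two]
    ext i j
    fin_cases i <;> fin_cases j <;>
        simp [hγ', Matrix.mul_apply, Fin.sum_univ_two] <;>
      rw [hm']
    · linear_combination (-(d:ℤ) * e) * hkey
    · ring
    · ring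
    · linear_combination (-(d:ℤ) * a) * hkey
  have hMdet : M.det = (d : ℤ) := by
    rw [hM, Matrix.det_fin_two_of]; linear_combination hdet
  have hdet' : γ'.det = 1 := by
    have h1 : (d : ℤ) ^ 2 * γ'.det = (d : ℤ) ^ 2 * 1 := by
      have h2 : ((d : ℤ) • γ').det = (d : ℤ) ^ 2 * γ'.det := by
        rw [Matrix.det_smul, Fintype.card_fin]
      rw [← h2, heq, Matrix.det_mul, Matrix.det_mul, hγ, Matrix.det_adjugate, hMdet,
        Fintype.card_fin]
      ring
    exact mul_left_cancel₀ (pow_ne_zero 2 hd0) h1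
  exact ⟨γ', heq, hdet', ⟨C*D*a + D*D*(d:ℤ)*c' - (m:ℤ)*C*C*b - C*D*e, by simp [hγ']⟩⟩
end

section
/- Let N be a positive integer, d a Hall divisor of N, and A, B, C, D integers with A·D·d² − B·C·N = d. Let M = [[A·d, B],[N·C, D·d]]. Then every entry of M² is divisible by d, and the integer matrix (1/d)·M² has determinant 1 and lower-left entry divisible by N; that is, M² ∈ d·Γ₀(N). -/
/-- For a Hall divisor `d` of `N` and `M = [[A·d, B],[N·C, D·d]]` with
`A·D·d² − B·C·N = d`, every entry of `M²` is divisible by `d`, and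
`(1/d)·M²` has determinant `1` and lower-left entry divisible by `N`;
that is, `M² ∈ d·Γ₀(N)`. -/
theorem atkin_lehner_is_involution (N d : ℕ) (hN : 0 < N)
    (hd : d ∣ N) (hHall : Nat.gcd d (N / d) = 1)
    (A B C D : ℤ) (hdet : A * D * (d : ℤ) ^ 2 - B * C * N = d)
    (M : Matrix (Fin 2) (Fin 2) ℤ)
    (hM : M = !![A * d, B; N * C, D * d]) :
    (∀ i j, (d : ℤ) ∣ (M * M) i j) ∧
    ∃ M' : Matrix (Fin 2) (Fin 2) ℤ,
      (d : ℤ) • M' = M * M ∧ M'.det = 1 ∧ (N : ℤ) ∣ M' 1 0 := by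
  subst hM
  have hsq : !![A * d, B; (N : ℤ) * C, D * d] * !![A * d, B; (N : ℤ) * C, D * d]
      = (d : ℤ) • !![A * (A + D) * d - 1, B * (A + D);
          (N : ℤ) * C * (A + D), D * (A + D) * d - 1] := by
    ext i j
    fin_cases i <;> fin_cases j <;>
      simp [Matrix.mul_apply, Fin.sum_univ_succ] <;>
      linarith [hdet]
  refine ⟨?_, !![A * (A + D) * d - 1, B * (A + D);
      (N : ℤ) * C * (A + D), D * (A + D) * d - 1], hsq.symm, ?_, ?_⟩
  · intro i j
    rw [hsq]
    exact Dvd.intro _ rfl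
  · simp only [Matrix.det_fin_two_of]
    linear_combination (A + D) ^ 2 * hdet
  · have h10 : (!![A * (A + D) * (d : ℤ) - 1, B * (A + D);
        (N : ℤ) * C * (A + D), D * (A + D) * d - 1]) 1 0
        = (N : ℤ) * C * (A + D) := by simp
    rw [h10]
    exact ⟨C * (A + D), by ring⟩
end

section
/- Let N and d be positive integers with d ∣ 24 and d² ∣ N. Then for every γ = [[a,b],[c,e]] ∈ SL₂(ℤ) with N ∣ c, the matrix [[1, 1/d],[0,1]]·γ·[[1, −1/d],[0,1]] = [[a + c/d, b + (e−a)/d − c/d²],[c, e − c/d]] has integer entries, determinant 1, and lower-left entry divisible by N. In particular conjugation by S_d = [[1,1/d],[0,1]] maps Γ₀(N) into Γ₀(N). -/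
/-!
Conjugation by `[[1, 1/d], [0, 1]]` creates denominators only through `c/d`, `(e - a)/d` and `c/d²`.
Since `d² ∣ N ∣ c`, the first and last are integers, and `a e = 1 + b c ≡ 1 (mod d)`. For `d ∣ 24`
every unit of `ℤ/dℤ` is its own inverse, so `e ≡ a (mod d)`. The determinant is unchanged because
the conjugating matrices are unipotent.
-/

open Matrix

theorem ZMod.eq_of_mul_eq_one_of_dvd_24 {d : ℕ} (hd : d ∣ 24) {x y : ZMod d} (hxy : x * y = 1) :
    x = y := by
  revert x y
  have hd_pos : 0 < d := Nat.pos_of_dvd_of_pos hd (by norm_num)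
  have hd_le : d ≤ 24 := Nat.le_of_dvd (by norm_num) hd
  interval_cases d <;> first
    | (exfalso; revert hd; decide)
    | decide

theorem Int.dvd_sub_of_dvd_mul_sub_one {d : ℕ} (hd : d ∣ 24) {a e : ℤ}
    (h : (d : ℤ) ∣ a * e - 1) : (d : ℤ) ∣ e - a := by
  rw [← ZMod.intCast_zmod_eq_zero_iff_dvd] at h ⊢
  push_cast at h ⊢
  rw [ZMod.eq_of_mul_eq_one_of_dvd_24 hd (sub_eq_zero.1 h), sub_self]

theorem unipotent_conj_fin_two {K : Type*} [Field K] (d a b c e : K) :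
    !![1, 1 / d; 0, 1] * !![a, b; c, e] * !![1, -(1 / d); 0, 1] =
      !![a + c / d, b + (e - a) / d - c / d ^ 2; c, e - c / d] := by
  rw [mul_fin_two, mul_fin_two]
  ext i j
  fin_cases i <;> fin_cases j <;> simp <;> ring

theorem det_unipotent_conj_fin_two {K : Type*} [Field K] (d : K) (M : Matrix (Fin 2) (Fin 2) K) :
    (!![1, 1 / d; 0, 1] * M * !![1, -(1 / d); 0, 1]).det = M.det := by
  rw [det_mul, det_mul, det_fin_two_of, det_fin_two_of]
  ring

theorem unipotent_conj_fin_two_eq_map_intCast {K : Type*} [Field K] [CharZero K] {d : ℕ}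
    {a b c e : ℤ} (hc : (d : ℤ) ^ 2 ∣ c) (hea : (d : ℤ) ∣ e - a) :
    !![(a : K) + c / d, (b : K) + (e - a) / d - c / d ^ 2; (c : K), (e : K) - c / d] =
      (!![a + c / d, b + (e - a) / d - c / d ^ 2; c, e - c / d] : Matrix (Fin 2) (Fin 2) ℤ).map
        (Int.cast : ℤ → K) := by
  have hdc : (d : ℤ) ∣ c := (dvd_pow_self _ two_ne_zero).trans hc
  ext i j
  fin_cases i <;> fin_cases j <;>
    simp [Int.cast_div_charZero hc, Int.cast_div_charZero hdc, Int.cast_div_charZero hea]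

theorem S_d_normalizes_general (N d : ℕ) (hd24 : d ∣ 24) (hd2 : d ^ 2 ∣ N)
    (a b c e : ℤ) (hdet : a * e - b * c = 1) (hc : (N : ℤ) ∣ c) :
    let S : Matrix (Fin 2) (Fin 2) ℚ := !![1, 1 / (d : ℚ); 0, 1]
    let S' : Matrix (Fin 2) (Fin 2) ℚ := !![1, -(1 / (d : ℚ)); 0, 1]
    let γ' : Matrix (Fin 2) (Fin 2) ℚ :=
      S * (!![(a : ℚ), b; c, e]) * S'
    γ' = !![(a : ℚ) + c / d, (b : ℚ) + (e - a) / d - c / d ^ 2;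
            (c : ℚ), (e : ℚ) - c / d] ∧
    (∀ i j, ∃ z : ℤ, γ' i j = (z : ℚ)) ∧
    γ'.det = 1 ∧
    (∃ z : ℤ, γ' 1 0 = (N : ℚ) * z) := by
  intro S S' γ'
  have hconj : γ' = _ := unipotent_conj_fin_two (d : ℚ) a b c e
  have hd2c : (d : ℤ) ^ 2 ∣ c := (Int.natCast_dvd_natCast.2 hd2).trans (by exact_mod_cast hc)
  have hea : (d : ℤ) ∣ e - a := by
    refine Int.dvd_sub_of_dvd_mul_sub_one hd24 ?_
    rw [show a * e - 1 = b * c by linarith]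
    exact ((dvd_pow_self _ two_ne_zero).trans hd2c).mul_left b
  refine ⟨hconj, ?_, ?_, ?_⟩
  · rw [hconj, unipotent_conj_fin_two_eq_map_intCast hd2c hea]
    exact fun i j => ⟨_, rfl⟩
  · rw [det_unipotent_conj_fin_two, det_fin_two_of]
    exact_mod_cast hdet
  · obtain ⟨z, rfl⟩ := hc
    exact ⟨z, by simp [hconj]⟩

/-- For `d ∣ 24` with `d² ∣ N` and `γ = [[a,b],[c,e]] ∈ Γ₀(N)`, the conjugate
`S_d·γ·S_d⁻¹`, where `S_d = [[1,1/d],[0,1]]`, equals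
`[[a + c/d, b + (e−a)/d − c/d²],[c, e − c/d]]`, has integer entries,
determinant `1`, and lower-left entry divisible by `N`. -/
theorem S_d_normalizes (N d : ℕ) (hN : 0 < N) (hd24 : d ∣ 24) (hd2 : d ^ 2 ∣ N)
    (a b c e : ℤ) (hdet : a * e - b * c = 1) (hc : (N : ℤ) ∣ c) :
    let S : Matrix (Fin 2) (Fin 2) ℚ := !![1, 1 / (d : ℚ); 0, 1]
    let S' : Matrix (Fin 2) (Fin 2) ℚ := !![1, -(1 / (d : ℚ)); 0, 1]
    let γ' : Matrix (Fin 2) (Fin 2) ℚ :=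
      S * (!![(a : ℚ), b; c, e]) * S'
    γ' = !![(a : ℚ) + c / d, (b : ℚ) + (e - a) / d - c / d ^ 2;
            (c : ℚ), (e : ℚ) - c / d] ∧
    (∀ i j, ∃ z : ℤ, γ' i j = (z : ℚ)) ∧
    γ'.det = 1 ∧
    (∃ z : ℤ, γ' 1 0 = (N : ℚ) * z) :=
  S_d_normalizes_general N d hd24 hd2 a b c e hdet hc
end
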